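/- In the shortest augmenting path algorithm for online bipartite matching, the height of every vertex is non-decreasing over arrivals: if x is any vertex, G^res the residual graph before an augmentation along a shortest path P to an unsaturated vertex, and H^res the residual graph after reversing P, then the distance in H^res from x to the set of unsaturated vertices is at least the distance in G^res from x to the set of unsaturated vertices. -/

import Mathlib

/-- `q` is a directed walk of length `k` from `a` to `b` in the digraph `D`. -/
def IsWalk {V : Type*} (D : V → V → Prop) (k : ℕ) (q : ℕ → V) (a b : V) : Prop :=
  q 0 = a ∧ q k = b ∧ ∀ i < k, D (q i) (q (i + 1))

/-!
A walk in the new residual graph `H` either uses an edge of `D` or traverses an edge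
`p (i+1) → p i` of the reversed path `P`. In the second case, if `p i` reaches an
unsaturated vertex within `m` steps of `D`, then `a` reaches one within `i + m` steps, so
`L ≤ i + m` because `P` is shortest; the tail of `P` from `p (i+1)` then reaches `b` within
`L - (i + 1) < m + 1` steps. Hence the `D`-distance to the unsaturated set drops by at most
one along each edge of `H`, and the claim follows by induction on the length of the walk.
-/

namespace IsWalk

variable {V : Type*} {D : V → V → Prop}

lemma single {x y : V} (h : D x y) : IsWalk D 1 (fun j => if j = 0 then x else y) x y :=
  ⟨rfl, rfl, fun i hi => by
    obtain rfl : i = 0 := by omega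
    simpa using h⟩

lemma tail {k : ℕ} {q : ℕ → V} {x y : V} (h : IsWalk D (k + 1) q x y) :
    IsWalk D k (fun j => q (j + 1)) (q 1) y :=
  ⟨rfl, h.2.1, fun i hi => h.2.2 (i + 1) (by omega)⟩

lemma take {L : ℕ} {p : ℕ → V} {a b : V} (h : IsWalk D L p a b) {i : ℕ} (hi : i ≤ L) :
    IsWalk D i p a (p i) :=
  ⟨h.1, rfl, fun j hj => h.2.2 j (by omega)⟩

lemma drop {L : ℕ} {p : ℕ → V} {a b : V} (h : IsWalk D L p a b) {i : ℕ} (hi : i ≤ L) :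
    IsWalk D (L - i) (fun j => p (i + j)) (p i) b := by
  refine ⟨rfl, by simp only [Nat.add_sub_cancel' hi, h.2.1], fun j hj => ?_⟩
  simpa only [Nat.add_assoc] using h.2.2 (i + j) (by omega)

lemma append {m n : ℕ} {q₁ q₂ : ℕ → V} {x y z : V}
    (h₁ : IsWalk D m q₁ x y) (h₂ : IsWalk D n q₂ y z) :
    IsWalk D (m + n) (fun j => if j ≤ m then q₁ j else q₂ (j - m)) x z := by
  obtain ⟨h₁0, h₁m, h₁e⟩ := h₁
  obtain ⟨h₂0, h₂n, h₂e⟩ := h₂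
  refine ⟨by simp [h₁0], ?_, fun i hi => ?_⟩
  · rcases Nat.eq_zero_or_pos n with rfl | hn
    · simp [h₁m, ← h₂n, ← h₂0]
    · simp only [if_neg (by omega : ¬ m + n ≤ m), Nat.add_sub_cancel_left, h₂n]
  · rcases lt_trichotomy i m with hlt | rfl | hgt
    · simpa only [if_pos hlt.le, if_pos (Nat.succ_le_of_lt hlt)] using h₁e i hlt
    · simpa only [le_refl, if_true, if_neg (by omega : ¬ i + 1 ≤ i), Nat.add_sub_cancel_left,
        h₁m, ← h₂0] using h₂e 0 (by omega)
    · simpa only [if_neg (by omega : ¬ i ≤ m), if_neg (by omega : ¬ i + 1 ≤ m),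
        show i + 1 - m = i - m + 1 by omega] using h₂e (i - m) (by omega)

end IsWalk

def ReachesWithin {V : Type*} (D : V → V → Prop) (S : Set V) (k : ℕ) (x : V) : Prop :=
  ∃ (k' : ℕ) (q : ℕ → V) (y : V), y ∈ S ∧ k' ≤ k ∧ IsWalk D k' q x y

namespace ReachesWithin

variable {V : Type*} {D : V → V → Prop} {S : Set V}

lemma of_mem {x : V} (hx : x ∈ S) (k : ℕ) : ReachesWithin D S k x :=
  ⟨0, fun _ => x, x, hx, Nat.zero_le k, rfl, rfl, fun _ hi => absurd hi (Nat.not_lt_zero _)⟩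

lemma of_adj {x z : V} {m : ℕ} (hxz : D x z) (h : ReachesWithin D S m z) :
    ReachesWithin D S (m + 1) x := by
  obtain ⟨k', q, y, hy, hk', hq⟩ := h
  exact ⟨1 + k', _, y, hy, by omega, (IsWalk.single hxz).append hq⟩

lemma of_isWalk {H : V → V → Prop}
    (hstep : ∀ x z m, H x z → ReachesWithin D S m z → ReachesWithin D S (m + 1) x) :
    ∀ {k : ℕ} {q : ℕ → V} {x y : V}, IsWalk H k q x y → y ∈ S → ReachesWithin D S k x
  | 0, _, _, _, hq, hy => of_mem (hq.1 ▸ hq.2.1 ▸ hy) 0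
  | _ + 1, q, x, _, hq, hy =>
    hstep x (q 1) _ (hq.1 ▸ hq.2.2 0 (Nat.succ_pos _)) (of_isWalk hstep hq.tail hy)

lemma succ_of_shortest {L : ℕ} {p : ℕ → V} {a b : V} (hP : IsWalk D L p a b) (hb : b ∈ S)
    (hshort : ∀ (k : ℕ) (q : ℕ → V) (y : V), y ∈ S → IsWalk D k q a y → L ≤ k)
    {i m : ℕ} (hi : i < L) (h : ReachesWithin D S m (p i)) :
    ReachesWithin D S (m + 1) (p (i + 1)) := by
  obtain ⟨k', q, y, hy, hk', hq⟩ := h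
  have hlong : L ≤ i + k' := hshort _ _ y hy ((hP.take hi.le).append hq)
  exact ⟨L - (i + 1), _, b, hb, by omega, hP.drop hi⟩

end ReachesWithin

theorem height_nondecreasing_general
    {V : Type*} (D : V → V → Prop) (unsat unsat' : Set V)
    (a b : V) (L : ℕ) (p : ℕ → V)
    (hP : IsWalk D L p a b)
    (hb : b ∈ unsat)
    (hshort : ∀ (k : ℕ) (q : ℕ → V) (y : V), y ∈ unsat → IsWalk D k q a y → L ≤ k)
    (H : V → V → Prop)
    (hH : ∀ x y, H x y ↔
      ((D x y ∧ ¬ ∃ i < L, p i = x ∧ p (i + 1) = y) ∨ (∃ i < L, p i = y ∧ p (i + 1) = x)))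
    (hsub : unsat' ⊆ unsat) :
    ∀ (x : V) (k : ℕ) (q : ℕ → V) (y : V), y ∈ unsat' → IsWalk H k q x y →
      ∃ (k' : ℕ) (q' : ℕ → V) (y' : V), y' ∈ unsat ∧ k' ≤ k ∧ IsWalk D k' q' x y' := by
  intro x k q y hy hq
  refine ReachesWithin.of_isWalk (fun u v m huv hv => ?_) hq (hsub hy)
  rcases (hH u v).mp huv with ⟨hD, -⟩ | ⟨i, hi, rfl, rfl⟩
  · exact hv.of_adj hD
  · exact hv.succ_of_shortest hP hb hshort hi

/-- Heights are non-decreasing under augmentation.  Let `P` (given by `p`, of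
length `L`, with distinct vertices) be a shortest directed path in the residual
graph `D` from the arriving vertex `a` to an unsaturated vertex `b`, and let `H`
be the graph obtained by reversing the edges of `P`.  The augmentation can only
remove `b` from the set of unsaturated vertices (`unsat' ⊆ unsat` and
`unsat \ unsat' ⊆ {b}`).  Then for every vertex `x`, the distance in `H` from `x`
to the new unsaturated set is at least the distance in `D` from `x` to the old
unsaturated set: every `H`-walk from `x` to a vertex of `unsat'` is at least as
long as some `D`-walk from `x` to a vertex of `unsat`. -/
theorem height_nondecreasing
    {V : Type*} [Fintype V] (D : V → V → Prop) (unsat unsat' : Set V)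
    (a b : V) (L : ℕ) (p : ℕ → V)
    (hP : IsWalk D L p a b)
    (hb : b ∈ unsat)
    (hinj : ∀ i j, i ≤ L → j ≤ L → p i = p j → i = j)
    (hshort : ∀ (k : ℕ) (q : ℕ → V) (y : V), y ∈ unsat → IsWalk D k q a y → L ≤ k)
    (H : V → V → Prop)
    (hH : ∀ x y, H x y ↔
      ((D x y ∧ ¬ ∃ i < L, p i = x ∧ p (i + 1) = y) ∨ (∃ i < L, p i = y ∧ p (i + 1) = x)))
    (hsub : unsat' ⊆ unsat) (hdiff : unsat \ unsat' ⊆ {b}) :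
    ∀ (x : V) (k : ℕ) (q : ℕ → V) (y : V), y ∈ unsat' → IsWalk H k q x y →
      ∃ (k' : ℕ) (q' : ℕ → V) (y' : V), y' ∈ unsat ∧ k' ≤ k ∧ IsWalk D k' q' x y' :=
  height_nondecreasing_general D unsat unsat' a b L p hP hb hshort H hH hsub
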